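/- arXiv:1303.1659 — 5 statements merged into one kernel-verified Lean document; each statement's English description precedes it below -/
import Mathlib

section
/- Let D be a (v,k,λ) difference set of order n in a finite abelian group G, with nontrivial character values among {√n, a, ā} where a·ā = n, and let |U_a| denote the number of nonprincipal characters χ with χ(D) = a. Then v·|D ∩ D^{(-1)}| = |U_a|(a² + ā²) + |U_c|·n + k², where |U_c| is the number of nonprincipal characters with χ(D) = √n; in particular |D ∩ D^{(-1)}| = k - (√n - d₁ + (k-√n)/v)(2√n + a + ā) < k, where d₁ = 1 if 1_G ∈ D and 0 otherwise. -/
/-!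
Orthogonality of characters gives `∑_χ χ(D)² = v·|D ∩ D⁻¹|`, `∑_χ χ(D) = v·d₁` and
`∑_χ 1 = v`. Evaluating the same sums through the values `k, √n, a, ā` of `χ(D)` (conjugating
characters shows `|U_b| = |U_a|`) turns them into linear relations between `|U_a|` and `|U_c|`.
Together with `k² = k + λ(v - 1)` they give `v·|D ∩ D⁻¹| = v·k + |U_a|(a - ā)²` and
`|U_a|(2√n - a - ā) = v(√n - d₁) + k - √n`, whence the closed formula. Equality
`|D ∩ D⁻¹| = k` would force `|U_a| = 0`, which is impossible: then `k + |U_c|√n = v·d₁ ≤ 1 + |U_c|`.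
-/

open Finset

/-- `D` is a `(v,k,λ)` difference set. -/
def IsDiffSet {G : Type*} [Group G] [DecidableEq G] (D : Finset G) (l : ℕ) : Prop :=
  ∀ g : G, g ≠ 1 → ((D ×ˢ D).filter (fun p => p.1 * p.2⁻¹ = g)).card = l

open ComplexConjugate
open scoped Pointwise

noncomputable def MonoidHom.equivAddCharAdditive (G : Type*) [CommGroup G] :
    AddChar (Additive G) ℂ ≃ (G →* ℂ) :=
  AddChar.toMonoidHomEquiv

noncomputable instance MonoidHom.instFintypeComplex (G : Type*) [CommGroup G] [Finite G] :
    Fintype (G →* ℂ) :=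
  Fintype.ofEquiv _ (MonoidHom.equivAddCharAdditive G)

namespace MonoidHom

variable {G : Type*} [CommGroup G] [Fintype G]

lemma card_complex_eq : Fintype.card (G →* ℂ) = Fintype.card G := by
  rw [← Fintype.card_congr (equivAddCharAdditive G), AddChar.card_eq]
  exact Fintype.card_congr Additive.toMul

variable [DecidableEq G]

lemma sum_complex_apply_eq_ite (g : G) :
    ∑ χ : G →* ℂ, χ g = if g = 1 then (Fintype.card G : ℂ) else 0 := by
  rw [← Equiv.sum_comp (equivAddCharAdditive G)]
  have := AddChar.sum_apply_eq_ite (Additive.ofMul g)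
  simp only [ofMul_eq_zero, Fintype.card_congr Additive.toMul] at this
  exact this

lemma sum_complex_sum_apply_eq_ite (D : Finset G) :
    ∑ χ : G →* ℂ, ∑ d ∈ D, χ d = if (1 : G) ∈ D then (Fintype.card G : ℂ) else 0 := by
  rw [sum_comm]
  simp_rw [sum_complex_apply_eq_ite, sum_ite_eq']

lemma sum_complex_sum_mul_sum (A B : Finset G) :
    ∑ χ : G →* ℂ, (∑ a ∈ A, χ a) * (∑ b ∈ B, χ b) = Fintype.card G * #(A ∩ B⁻¹) := by
  calc ∑ χ : G →* ℂ, (∑ a ∈ A, χ a) * (∑ b ∈ B, χ b)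
      = ∑ a ∈ A, ∑ b ∈ B, ∑ χ : G →* ℂ, χ (a * b) := by
        simp_rw [sum_mul_sum, ← map_mul]
        rw [sum_comm]
        exact sum_congr rfl fun a _ => sum_comm
    _ = ∑ a ∈ A, if a ∈ B⁻¹ then (Fintype.card G : ℂ) else 0 := by
        simp_rw [sum_complex_apply_eq_ite, mul_eq_one_iff_eq_inv', sum_ite_eq', mem_inv']
    _ = Fintype.card G * #(A ∩ B⁻¹) := by
        rw [← sum_filter, filter_mem_eq_inter, sum_const, nsmul_eq_mul, mul_comm]

end MonoidHom

lemma IsDiffSet.card_sq_add {G : Type*} [Group G] [Fintype G] [DecidableEq G] {D : Finset G}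
    {l : ℕ} (hD : IsDiffSet D l) : #D ^ 2 + l = #D + l * Fintype.card G := by
  have hfib := card_eq_sum_card_fiberwise (s := D ×ˢ D) (t := univ)
    (f := fun p => p.1 * p.2⁻¹) fun _ _ => mem_coe.2 (mem_univ _)
  rw [Fintype.sum_eq_add_sum_compl 1, sum_congr rfl fun g hg => hD g (by simpa using hg),
    sum_const, card_compl, card_singleton] at hfib
  simp_rw [mul_inv_eq_one, ← diag_eq_filter, diag_card, card_product] at hfib
  obtain ⟨v, hv⟩ := Nat.exists_eq_add_one_of_ne_zero (Fintype.card_ne_zero (α := G))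
  rw [sq, hfib, hv, Nat.add_sub_cancel, smul_eq_mul]
  ring

section CharCount

variable {G : Type*} [CommGroup G]

/-- The paper's `|U_z|`. -/
noncomputable def nontrivialCharCount (D : Finset G) (z : ℂ) : ℕ :=
  Nat.card {χ : G →* ℂ // χ ≠ 1 ∧ ∑ d ∈ D, χ d = z}

lemma nontrivialCharCount_conj (D : Finset G) (z : ℂ) :
    nontrivialCharCount D (conj z) = nontrivialCharCount D z := by
  let conjChar : Equiv.Perm (G →* ℂ) :=
    Function.Involutive.toPerm ((starRingEnd ℂ).toMonoidHom.comp ·) fun χ => by ext; simp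
  refine (Nat.card_congr (conjChar.subtypeEquiv fun χ => ?_)).symm
  simp [conjChar, MonoidHom.ext_iff, ← map_sum, map_eq_one_iff _ (RingHom.injective _),
    (RingHom.injective _).eq_iff]

lemma sum_comp_sum_apply_eq [Finite G] (D : Finset G) {M : Type*} [AddCommMonoid M] (f : ℂ → M)
    {t : Finset ℂ} (ht : ∀ χ : G →* ℂ, χ ≠ 1 → ∑ d ∈ D, χ d ∈ t) :
    ∑ χ : G →* ℂ, f (∑ d ∈ D, χ d) = f #D + ∑ z ∈ t, nontrivialCharCount D z • f z := by
  classical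
  rw [Fintype.sum_eq_add_sum_compl 1,
    ← sum_fiberwise_of_maps_to' (t := t) fun χ hχ => ht χ (by simpa using hχ)]
  congr 1
  · simp
  · refine sum_congr rfl fun z _ => ?_
    rw [sum_const, nontrivialCharCount, Nat.card_eq_fintype_card, Fintype.card_subtype]
    congr 2
    ext
    simp

section ThreeValues

variable [Fintype G] {D : Finset G} {x : ℝ} {a : ℂ}

lemma sum_comp_sum_apply_eq_of_three_values (ha : a ≠ conj a)
    (hvals : ∀ χ : G →* ℂ, χ ≠ 1 → ∑ d ∈ D, χ d ∈ ({(x : ℂ), a, conj a} : Set ℂ)) (f : ℂ → ℂ) :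
    ∑ χ : G →* ℂ, f (∑ d ∈ D, χ d) =
      f #D + nontrivialCharCount D x * f x + nontrivialCharCount D a * (f a + f (conj a)) := by
  have hxa : (x : ℂ) ≠ a := by rintro rfl; simp at ha
  have hxa' : (x : ℂ) ≠ conj a := by intro h; apply hxa; simpa using congrArg conj h
  rw [sum_comp_sum_apply_eq D f (t := {(x : ℂ), a, conj a}) (by simpa using hvals),
    sum_insert (by simp [hxa, hxa']), sum_pair ha, nontrivialCharCount_conj]
  simp only [nsmul_eq_mul]
  ring

lemma card_eq_one_add_nontrivialCharCount (ha : a ≠ conj a)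
    (hvals : ∀ χ : G →* ℂ, χ ≠ 1 → ∑ d ∈ D, χ d ∈ ({(x : ℂ), a, conj a} : Set ℂ)) :
    Fintype.card G = 1 + nontrivialCharCount D x + 2 * nontrivialCharCount D a := by
  have := sum_comp_sum_apply_eq_of_three_values ha hvals fun _ => 1
  rw [sum_const, card_univ, MonoidHom.card_complex_eq, nsmul_eq_mul, mul_one] at this
  exact_mod_cast (by linear_combination this :
    (Fintype.card G : ℂ) = 1 + nontrivialCharCount D x + 2 * nontrivialCharCount D a)

variable [DecidableEq G]

lemma card_mul_card_inter_inv_eq (ha : a ≠ conj a)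
    (hvals : ∀ χ : G →* ℂ, χ ≠ 1 → ∑ d ∈ D, χ d ∈ ({(x : ℂ), a, conj a} : Set ℂ)) :
    (Fintype.card G : ℂ) * #(D ∩ D⁻¹) =
      #D ^ 2 + nontrivialCharCount D x * x ^ 2 +
        nontrivialCharCount D a * (a ^ 2 + conj a ^ 2) := by
  rw [← MonoidHom.sum_complex_sum_mul_sum]
  simp_rw [← sq]
  exact sum_comp_sum_apply_eq_of_three_values ha hvals (· ^ 2)

lemma card_mul_ite_one_mem_eq (ha : a ≠ conj a)
    (hvals : ∀ χ : G →* ℂ, χ ≠ 1 → ∑ d ∈ D, χ d ∈ ({(x : ℂ), a, conj a} : Set ℂ)) :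
    (Fintype.card G : ℂ) * (if (1 : G) ∈ D then 1 else 0) =
      #D + nontrivialCharCount D x * x + nontrivialCharCount D a * (a + conj a) := by
  rw [mul_ite, mul_one, mul_zero, ← MonoidHom.sum_complex_sum_apply_eq_ite]
  exact sum_comp_sum_apply_eq_of_three_values ha hvals id

lemma card_mul_card_inter_inv_eq_card_mul_card_add {l : ℕ} (hD : IsDiffSet D l)
    (hx : x ^ 2 = #D - l) (hn : a * conj a = #D - l) (ha : a ≠ conj a)
    (hvals : ∀ χ : G →* ℂ, χ ≠ 1 → ∑ d ∈ D, χ d ∈ ({(x : ℂ), a, conj a} : Set ℂ)) :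
    (Fintype.card G : ℂ) * #(D ∩ D⁻¹) =
      Fintype.card G * #D + nontrivialCharCount D a * (a - conj a) ^ 2 := by
  have hsq := card_mul_card_inter_inv_eq ha hvals
  have hcard : (Fintype.card G : ℂ) = _ :=
    congrArg Nat.cast (card_eq_one_add_nontrivialCharCount ha hvals)
  have hds : ((#D ^ 2 + l : ℕ) : ℂ) = _ := congrArg Nat.cast hD.card_sq_add
  have hx' : (x : ℂ) ^ 2 = #D - l := by exact_mod_cast hx
  push_cast at hcard hds
  linear_combination hsq + hds - (#D - l : ℂ) * hcard + (nontrivialCharCount D x : ℂ) * hx'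
    + 2 * (nontrivialCharCount D a : ℂ) * hn

lemma nontrivialCharCount_mul_eq (ha : a ≠ conj a)
    (hvals : ∀ χ : G →* ℂ, χ ≠ 1 → ∑ d ∈ D, χ d ∈ ({(x : ℂ), a, conj a} : Set ℂ)) :
    nontrivialCharCount D a * (2 * x - a - conj a) =
      Fintype.card G * (x - if (1 : G) ∈ D then 1 else 0) + #D - x := by
  have hlin := card_mul_ite_one_mem_eq ha hvals
  have hcard : (Fintype.card G : ℂ) = _ :=
    congrArg Nat.cast (card_eq_one_add_nontrivialCharCount ha hvals)
  push_cast at hcard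
  linear_combination hlin - (x : ℂ) * hcard

lemma nontrivialCharCount_ne_zero (hD : 2 ≤ #D) (hx : 1 ≤ x) (ha : a ≠ conj a)
    (hvals : ∀ χ : G →* ℂ, χ ≠ 1 → ∑ d ∈ D, χ d ∈ ({(x : ℂ), a, conj a} : Set ℂ)) :
    nontrivialCharCount D a ≠ 0 := by
  intro h0
  have hlin := card_mul_ite_one_mem_eq ha hvals
  have hcard := card_eq_one_add_nontrivialCharCount ha hvals
  rw [h0, Nat.cast_zero, zero_mul, add_zero] at hlin
  rw [h0, mul_zero, add_zero] at hcard
  have hlin' : (Fintype.card G : ℝ) * (if (1 : G) ∈ D then 1 else 0) =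
      #D + nontrivialCharCount D x * x :=
    Complex.ofReal_injective (by simpa [apply_ite] using hlin)
  have hx0 : (0 : ℝ) ≤ nontrivialCharCount D x := Nat.cast_nonneg _
  have hD' : (2 : ℝ) ≤ #D := by exact_mod_cast hD
  rw [hcard, Nat.cast_add, Nat.cast_one] at hlin'
  split_ifs at hlin' <;> nlinarith

lemma card_inter_inv_lt_card {l : ℕ} (hD : IsDiffSet D l) (hl : 0 < l) (hlD : l < #D)
    (hx0 : 0 ≤ x) (hx : x ^ 2 = #D - l) (hn : a * conj a = #D - l) (ha : a ≠ conj a)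
    (hvals : ∀ χ : G →* ℂ, χ ≠ 1 → ∑ d ∈ D, χ d ∈ ({(x : ℂ), a, conj a} : Set ℂ)) :
    #(D ∩ D⁻¹) < #D := by
  have hx1 : 1 ≤ x := by
    have : (1 : ℝ) ≤ #D - l := by rw [le_sub_iff_add_le']; exact_mod_cast Nat.succ_le_of_lt hlD
    nlinarith
  have hUa := nontrivialCharCount_ne_zero (by omega) hx1 ha hvals
  refine (card_le_card inter_subset_left).lt_of_ne fun hk => ?_
  have := card_mul_card_inter_inv_eq_card_mul_card_add hD hx hn ha hvals
  rw [hk] at this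
  simp [hUa, sub_eq_zero, ha] at this

end ThreeValues

end CharCount

/-- For a difference set `D` of order `n` whose nontrivial character values lie in
`{√n, a, ā}` (with `a` non-real and `a·ā = n`), writing `|U_a|`, `|U_c|` for the
numbers of nonprincipal characters with value `a`, `√n` respectively, one has
`v·|D ∩ D^{(-1)}| = |U_a|(a² + ā²) + |U_c|·n + k²`, and hence
`|D ∩ D^{(-1)}| = k - (√n - d₁ + (k-√n)/v)(2√n + a + ā) < k`. -/
theorem card_D_inter_Dinv {G : Type*} [CommGroup G] [Fintype G] [DecidableEq G]
    (D : Finset G) (v k lam n : ℕ) (hv : Fintype.card G = v)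
    (hk : D.card = k) (hDS : IsDiffSet D lam) (hlam : 0 < lam) (hlk : lam < k)
    (hn : n = k - lam)
    (r : ℕ) (hr : r ^ 2 = n)
    (a : ℂ) (ha : a * (starRingEnd ℂ) a = (n : ℂ)) (haa : a ≠ (starRingEnd ℂ) a)
    (hvals : ∀ χ : G →* ℂ, χ ≠ 1 →
      (∑ d ∈ D, χ d) ∈ ({(r : ℂ), a, (starRingEnd ℂ) a} : Set ℂ))
    (Ua Uc : ℕ)
    (hUa : Ua = Nat.card {χ : G →* ℂ // χ ≠ 1 ∧ ∑ d ∈ D, χ d = a})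
    (hUc : Uc = Nat.card {χ : G →* ℂ // χ ≠ 1 ∧ ∑ d ∈ D, χ d = (r : ℂ)})
    (d₁ : ℕ) (hd₁ : d₁ = if (1 : G) ∈ D then 1 else 0) :
    ((v : ℂ) * ((D ∩ D.image (·⁻¹)).card : ℂ)
        = (Ua : ℂ) * (a ^ 2 + ((starRingEnd ℂ) a) ^ 2) + (Uc : ℂ) * (n : ℂ) + (k : ℂ) ^ 2) ∧
      (((D ∩ D.image (·⁻¹)).card : ℂ)
        = (k : ℂ) - ((r : ℂ) - (d₁ : ℂ) + ((k : ℂ) - (r : ℂ)) / (v : ℂ)) *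
            (2 * (r : ℂ) + a + (starRingEnd ℂ) a)) ∧
      (D ∩ D.image (·⁻¹)).card < k := by
  subst hv hk hn hd₁
  obtain rfl : Ua = nontrivialCharCount D a := hUa
  obtain rfl : Uc = nontrivialCharCount D r := hUc
  replace hvals : ∀ χ : G →* ℂ, χ ≠ 1 → ∑ d ∈ D, χ d ∈ ({((r : ℝ) : ℂ), a, conj a} : Set ℂ) := by
    simpa using hvals
  have hn : ((#D - lam : ℕ) : ℂ) = #D - lam := Nat.cast_sub hlk.le
  have hrR : (r : ℝ) ^ 2 = #D - lam := by rw [← Nat.cast_sub hlk.le]; exact_mod_cast hr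
  have hrC : (r : ℂ) ^ 2 = #D - lam := by rw [← hn]; exact_mod_cast hr
  rw [hn] at ha ⊢
  have hsq := card_mul_card_inter_inv_eq haa hvals
  have hI := card_mul_card_inter_inv_eq_card_mul_card_add hDS hrR ha haa hvals
  have hUa := nontrivialCharCount_mul_eq haa hvals
  simp only [Complex.ofReal_natCast] at hsq hUa
  rw [image_inv_eq_inv]
  refine ⟨?_, ?_, card_inter_inv_lt_card hDS hlam hlk (Nat.cast_nonneg r) hrR ha haa hvals⟩
  · linear_combination hsq + (nontrivialCharCount D r : ℂ) * hrC
  · have hv : (Fintype.card G : ℂ) ≠ 0 := by exact_mod_cast Fintype.card_ne_zero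
    push_cast
    field_simp
    linear_combination
      hI - (2 * r + a + conj a) * hUa + 4 * (nontrivialCharCount D a : ℂ) * (hrC - ha)
end

section
/- Let D be a difference set in a finite abelian group G with exactly three nontrivial character values √n, a, ā. Then D + D^{(-1)} ≠ G - 1_G + 2d₁·1_G in ℤ[G]; equivalently at least one of E₁ = (D ∩ D^{(-1)}) \ {1_G} and E₄ = G \ (D ∪ D^{(-1)} ∪ {1_G}) is nonempty. -/
/-!
If `E₁` and `E₄` are both empty, every `g ≠ 1` lies in exactly one of `D` and `D⁻¹`, which is
the group ring identity `D + D⁻¹ = G - 1 + 2d₁`. Applying a nonprincipal character `χ` gives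
`χ(D) + χ(D⁻¹) = 2d₁ - 1`. Choose `χ` with `χ(D) = √n`; then `χ⁻¹ = χ ∘ inv` is nonprincipal
and `χ⁻¹(D) = 2d₁ - 1 - √n` is an integer. It cannot be `√n` by parity, and it cannot be `a`
or `ā`, which are not real.
-/

open Finset

open MonoidAlgebra ComplexConjugate
open scoped Pointwise

lemma MonoidAlgebra.coeff_sum_single_one {R M : Type*} [Semiring R] [Monoid M] [DecidableEq M]
    (S : Finset M) (m : M) :
    (∑ s ∈ S, single s (1 : R)).coeff m = if m ∈ S then 1 else 0 := by
  simp [Finsupp.single_apply]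

section Group

variable {G : Type*} [Group G]

lemma mem_iff_inv_notMem_of_sdiff_eq_empty [Fintype G] [DecidableEq G] {D : Finset G}
    (hE₁ : (D ∩ D.image (·⁻¹)) \ {1} = ∅) (hE₄ : univ \ (D ∪ D.image (·⁻¹) ∪ {1}) = ∅) :
    ∀ g ≠ 1, g ∈ D ↔ g⁻¹ ∉ D := by
  intro g hg
  have h₁ := eq_empty_iff_forall_notMem.mp hE₁ g
  have h₄ := eq_empty_iff_forall_notMem.mp hE₄ g
  simp only [image_inv_eq_inv, mem_sdiff, mem_inter, mem_union, mem_inv', mem_singleton,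
    mem_univ, hg, true_and, or_false, not_not] at h₁ h₄
  tauto

lemma sum_single_inv_eq_sum_single [DecidableEq G] (D : Finset G) :
    ∑ d ∈ D, single d⁻¹ (1 : ℤ) = ∑ g ∈ D⁻¹, single g 1 := by
  rw [← image_inv_eq_inv, sum_image inv_injective.injOn]

lemma sum_single_add_sum_single_inv_eq [Fintype G] [DecidableEq G] (D : Finset G) (d₁ : ℕ)
    (hd₁ : d₁ = if (1 : G) ∈ D then 1 else 0) (hD : ∀ g ≠ 1, g ∈ D ↔ g⁻¹ ∉ D) :
    (∑ d ∈ D, single d (1 : ℤ)) + (∑ d ∈ D, single d⁻¹ (1 : ℤ)) =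
      (∑ g : G, single g (1 : ℤ)) - 1 + (2 * (d₁ : ℤ)) • (1 : MonoidAlgebra ℤ G) := by
  ext g
  rw [sum_single_inv_eq_sum_single]
  simp only [coeff_add, coeff_sub, coeff_smul, Finsupp.add_apply, Finsupp.sub_apply,
    Finsupp.smul_apply, coeff_sum_single_one, one_def, coeff_single, Finsupp.single_apply,
    mem_inv', mem_univ, if_true]
  rcases eq_or_ne g 1 with rfl | hg
  · subst hd₁
    split_ifs <;> simp_all
  · have hinv : g⁻¹ ∈ D ↔ g ∉ D := by rw [hD g hg, not_not]
    by_cases h : g ∈ D <;> simp [h, hinv, hg.symm]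

lemma sum_char_add_sum_char_inv_eq [Fintype G] {D : Finset G} {c : ℤ}
    (h : (∑ d ∈ D, single d (1 : ℤ)) + (∑ d ∈ D, single d⁻¹ (1 : ℤ)) =
      (∑ g : G, single g (1 : ℤ)) - 1 + c • (1 : MonoidAlgebra ℤ G))
    (χ : G →* ℂ) (hχ : χ ≠ 1) :
    ∑ d ∈ D, χ d + ∑ d ∈ D, χ d⁻¹ = ((c - 1 : ℤ) : ℂ) := by
  have := congrArg (lift ℤ ℂ G χ) h
  simp only [map_add, map_sub, map_sum, map_zsmul, map_one, lift_single, one_smul,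
    sum_hom_units_eq_zero χ hχ] at this
  rw [this, zsmul_eq_mul, mul_one]
  push_cast
  ring

end Group

section CommGroup

variable {G : Type*} [CommGroup G]

lemma comp_invMonoidHom_ne_one {χ : G →* ℂ} (hχ : χ ≠ 1) : χ.comp invMonoidHom ≠ 1 := by
  intro h
  apply hχ
  ext g
  simpa using DFunLike.congr_fun h g⁻¹

lemma false_of_sum_char_add_sum_char_inv_eq {D : Finset G} {r : ℕ} {a : ℂ} (haa : a ≠ conj a)
    (hvals : {z : ℂ | ∃ χ : G →* ℂ, χ ≠ 1 ∧ ∑ d ∈ D, χ d = z} = {(r : ℂ), a, conj a})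
    (m : ℤ) (h : ∀ χ : G →* ℂ, χ ≠ 1 → ∑ d ∈ D, χ d + ∑ d ∈ D, χ d⁻¹ = ((2 * m - 1 : ℤ) : ℂ)) :
    False := by
  obtain ⟨χ, hχ, hχr⟩ : (r : ℂ) ∈ {z : ℂ | ∃ χ : G →* ℂ, χ ≠ 1 ∧ ∑ d ∈ D, χ d = z} := by
    rw [hvals]; exact Set.mem_insert _ _
  have hψ : ∑ d ∈ D, χ.comp invMonoidHom d ∈ ({(r : ℂ), a, conj a} : Set ℂ) :=
    hvals ▸ ⟨_, comp_invMonoidHom_ne_one hχ, rfl⟩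
  have hψval : ∑ d ∈ D, χ.comp invMonoidHom d = ((2 * m - 1 - r : ℤ) : ℂ) := by
    simp only [MonoidHom.coe_comp, Function.comp_apply, invMonoidHom_apply]
    have hsum := h χ hχ
    push_cast at hsum ⊢
    linear_combination hsum - hχr
  rw [hψval, Set.mem_insert_iff, Set.mem_insert_iff, Set.mem_singleton_iff] at hψ
  rcases hψ with hr | ha | ha
  · have : 2 * m - 1 - r = r := by exact_mod_cast hr
    omega
  · exact haa (by rw [← ha, map_intCast])
  · have hreal := congrArg conj ha
    rw [map_intCast, Complex.conj_conj] at hreal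
    exact haa (hreal.symm.trans ha)

end CommGroup

theorem E1_or_E4_nonempty_general {G : Type*} [CommGroup G] [Fintype G] [DecidableEq G]
    (D : Finset G)
    (r : ℕ)
    (a : ℂ) (haa : a ≠ (starRingEnd ℂ) a)
    (hvals : {z : ℂ | ∃ χ : G →* ℂ, χ ≠ 1 ∧ ∑ d ∈ D, χ d = z}
      = {(r : ℂ), a, (starRingEnd ℂ) a})
    (d₁ : ℕ) (hd₁ : d₁ = if (1 : G) ∈ D then 1 else 0) :
    ((∑ d ∈ D, MonoidAlgebra.single d (1 : ℤ)) +
        (∑ d ∈ D, MonoidAlgebra.single d⁻¹ (1 : ℤ)) ≠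
      (∑ g : G, MonoidAlgebra.single g (1 : ℤ)) - 1 +
        (2 * (d₁ : ℤ)) • (1 : MonoidAlgebra ℤ G)) ∧
      (((D ∩ D.image (·⁻¹)) \ {1}).Nonempty ∨
        (Finset.univ \ (D ∪ D.image (·⁻¹) ∪ {1})).Nonempty) := by
  have hne : (∑ d ∈ D, single d (1 : ℤ)) + (∑ d ∈ D, single d⁻¹ (1 : ℤ)) ≠
      (∑ g : G, single g (1 : ℤ)) - 1 + (2 * (d₁ : ℤ)) • (1 : MonoidAlgebra ℤ G) :=
    fun h => false_of_sum_char_add_sum_char_inv_eq haa hvals d₁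
      (sum_char_add_sum_char_inv_eq h)
  refine ⟨hne, ?_⟩
  by_contra hE
  rw [not_or, not_nonempty_iff_eq_empty, not_nonempty_iff_eq_empty] at hE
  exact hne (sum_single_add_sum_single_inv_eq D d₁ hd₁
    (mem_iff_inv_notMem_of_sdiff_eq_empty hE.1 hE.2))

/-- If a difference set `D` has exactly three nontrivial character values
`√n, a, ā`, then `D + D^{(-1)} ≠ G - 1 + 2d₁·1` in `ℤ[G]`; equivalently, at least
one of `E₁ = (D ∩ D^{(-1)}) \ {1}` and `E₄ = G \ (D ∪ D^{(-1)} ∪ {1})` is nonempty. -/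
theorem E1_or_E4_nonempty {G : Type*} [CommGroup G] [Fintype G] [DecidableEq G]
    (D : Finset G) (lam n : ℕ) (hDS : IsDiffSet D lam)
    (r : ℕ) (hr : r ^ 2 = n)
    (a : ℂ) (ha : a * (starRingEnd ℂ) a = (n : ℂ)) (haa : a ≠ (starRingEnd ℂ) a)
    (hvals : {z : ℂ | ∃ χ : G →* ℂ, χ ≠ 1 ∧ ∑ d ∈ D, χ d = z}
      = {(r : ℂ), a, (starRingEnd ℂ) a})
    (h3 : ({(r : ℂ), a, (starRingEnd ℂ) a} : Set ℂ).ncard = 3)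
    (d₁ : ℕ) (hd₁ : d₁ = if (1 : G) ∈ D then 1 else 0) :
    ((∑ d ∈ D, MonoidAlgebra.single d (1 : ℤ)) +
        (∑ d ∈ D, MonoidAlgebra.single d⁻¹ (1 : ℤ)) ≠
      (∑ g : G, MonoidAlgebra.single g (1 : ℤ)) - 1 +
        (2 * (d₁ : ℤ)) • (1 : MonoidAlgebra ℤ G)) ∧
      (((D ∩ D.image (·⁻¹)) \ {1}).Nonempty ∨
        (Finset.univ \ (D ∪ D.image (·⁻¹) ∪ {1})).Nonempty) :=
  E1_or_E4_nonempty_general D r a haa hvals d₁ hd₁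
end

section
/- Let D be a (v,k,λ) difference set of order n = k - λ in a finite abelian group G, and let q be a prime dividing n with gcd(q, v) = 1. Suppose the nontrivial character values of D are √n, a, ā, where a ∈ ℚ(√d) for a negative squarefree d, and suppose 2√n - a - ā divides v. Then σ_q fixes a and ā, and consequently D^{(q)} = D, i.e., q is a multiplier of D. -/
open Finset

/-!
Work modulo `q` in the ring `𝓡` of all algebraic integers. There `r ≡ 0` and `a ā = n ≡ 0`,
while `a + ā = A` is an integer prime to `q`, because `2r - A ∣ v`. So the residue `x` of `a`
satisfies `x² = A x`, hence `x^q = A^(q-1) x = x` by Fermat, and likewise for `ā`: Frobenius fixes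
the residues of `r`, `a`, `ā`. These three residues are pairwise distinct: `a ≡ 0` would force
`ā ≡ 0` by conjugation, hence `A ≡ 0`, and `a ≡ ā` would give `A² ≡ 4 a ā ≡ 0`.
For a nontrivial character `χ`, `χ^q` is nontrivial too, and
`S(χ^q) ≡ S(χ)^q ≡ S(χ) (mod q)`, so the two sums, both in `{r, a, ā}`, are equal. Fourier
inversion on `G` turns the equality of all character sums of `D^{(q)}` and `D` into `D^{(q)} = D`.
-/

local notation "𝓡" => integralClosure ℤ ℂ

theorem Set.injOn_triple {α β : Type*} {f : α → β} {x y z : α} (hxy : f x ≠ f y)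
    (hxz : f x ≠ f z) (hyz : f y ≠ f z) : Set.InjOn f {x, y, z} := by
  rintro a (rfl | rfl | rfl) b (rfl | rfl | rfl) h <;> simp_all [eq_comm]

section IntegralClosure

variable {K : Type*} [Field K] [CharZero K]

theorem integralClosure.natCast_dvd_natCast {m n : ℕ} :
    (n : integralClosure ℤ K) ∣ m ↔ n ∣ m := by
  refine ⟨fun ⟨w, hw⟩ => ?_, fun h => by exact_mod_cast Nat.cast_dvd_cast h⟩
  rcases eq_or_ne n 0 with rfl | hn
  · simp_all
  have hwK : (w : K) = algebraMap ℚ K ((m : ℚ) / n) := by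
    have := congrArg Subtype.val hw
    push_cast at this
    rw [map_div₀, map_natCast, map_natCast, this, mul_div_cancel_left₀ _ (by exact_mod_cast hn)]
  obtain ⟨y, hy⟩ := IsIntegrallyClosed.isIntegral_iff.mp
    ((isIntegral_algebraMap_iff (algebraMap ℚ K).injective).mp (hwK ▸ w.2))
  rw [eq_div_iff (by exact_mod_cast hn), algebraMap_int_eq, eq_intCast] at hy
  exact Int.natCast_dvd_natCast.mp ⟨y, by rw [mul_comm]; exact_mod_cast hy.symm⟩

instance integralClosure.charP_quotient_span_natCast (q : ℕ) :
    CharP (integralClosure ℤ K ⧸ Ideal.span {(q : integralClosure ℤ K)}) q :=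
  ⟨fun m => by
    rw [← map_natCast (Ideal.Quotient.mk _), Ideal.Quotient.eq_zero_iff_dvd,
      integralClosure.natCast_dvd_natCast]⟩

end IntegralClosure

def conjIntegralClosure : 𝓡 →+* 𝓡 :=
  (starRingEnd ℂ).restrict 𝓡 𝓡 fun _ hz => hz.map (starRingEnd ℂ).toIntAlgHom

@[simp]
theorem coe_conjIntegralClosure (z : 𝓡) : (conjIntegralClosure z : ℂ) = starRingEnd ℂ z := rfl

theorem conjIntegralClosure_conjIntegralClosure (z : 𝓡) :
    conjIntegralClosure (conjIntegralClosure z) = z :=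
  Subtype.ext (Complex.conj_conj _)

section CharP

variable {R : Type*} [CommRing R] {p : ℕ} [Fact p.Prime] [CharP R p] {A : ℤ} {x y : R}

theorem pow_char_eq_self_of_add_eq_intCast_of_mul_eq_zero (hA : ¬ (p : ℤ) ∣ A)
    (hsum : x + y = A) (hprod : x * y = 0) : x ^ p = x := by
  have hpow : ∀ m, x ^ (m + 1) = A ^ m * x := by
    intro m
    induction m with
    | zero => simp
    | succ m ih => rw [pow_succ, ih, ← hsum]; linear_combination -(x + y) ^ m * hprod
  have hfermat : (A : R) ^ (p - 1) = 1 := by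
    have hcop : IsCoprime A p :=
      ((Nat.prime_iff_prime_int.mp Fact.out).coprime_iff_not_dvd.mpr hA).symm
    exact_mod_cast (CharP.intCast_eq_intCast R p).mpr
      (Int.ModEq.pow_card_sub_one_eq_one Fact.out hcop)
  rw [← Nat.sub_add_cancel (Fact.out : p.Prime).one_le, hpow, hfermat, one_mul]

theorem ne_of_add_eq_intCast_of_mul_eq_zero (hA : ¬ (p : ℤ) ∣ A) (hsum : x + y = A)
    (hprod : x * y = 0) : x ≠ y := by
  rintro rfl
  have : ((A ^ 2 : ℤ) : R) = 0 := by rw [Int.cast_pow, ← hsum]; linear_combination 4 * hprod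
  exact hA (Int.Prime.dvd_pow' Fact.out ((CharP.intCast_eq_zero_iff R p _).mp this))

end CharP

section Characters

variable {G : Type*} [CommGroup G]

theorem AddChar.finset_eq_of_forall_sum_eq {α : Type*} [AddCommGroup α] [Fintype α]
    {E F : Finset α} (h : ∀ ψ : AddChar α ℂ, ∑ x ∈ E, ψ x = ∑ x ∈ F, ψ x) : E = F := by
  classical
  have hinv : ∀ (E : Finset α) (g : α), ∑ ψ : AddChar α ℂ, (∑ x ∈ E, ψ x) * ψ (-g) =
      if g ∈ E then (Fintype.card α : ℂ) else 0 := by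
    intro E g
    simp_rw [sum_mul, ← AddChar.map_add_eq_mul]
    rw [sum_comm]
    simp_rw [AddChar.sum_apply_eq_ite, ← sub_eq_add_neg, sub_eq_zero, sum_ite_eq']
  ext g
  have hg := hinv E g
  simp_rw [h, hinv F g] at hg
  have hcard : (Fintype.card α : ℂ) ≠ 0 := by exact_mod_cast Fintype.card_ne_zero
  by_cases hE : g ∈ E <;> by_cases hF : g ∈ F <;> simp_all

theorem Finset.eq_of_forall_sum_monoidHom_eq [Fintype G] {E F : Finset G}
    (h : ∀ χ : G →* ℂ, ∑ g ∈ E, χ g = ∑ g ∈ F, χ g) : E = F :=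
  AddChar.finset_eq_of_forall_sum_eq (α := Additive G) fun ψ => h ψ.toMonoidHom

theorem MonoidHom.pow_ne_one_of_coprime_card {M : Type*} [CommMonoid M] {χ : G →* M}
    (hχ : χ ≠ 1) {q : ℕ} (hq : (Nat.card G).Coprime q) : χ ^ q ≠ 1 := by
  refine fun h => hχ (MonoidHom.ext fun g => ?_)
  have := pow_gcd_eq_one.mpr
    ⟨by rw [← map_pow, pow_card_eq_one', map_one], (DFunLike.congr_fun h g : (χ ^ q) g = 1)⟩
  rwa [hq, pow_one] at this

variable [Finite G]

theorem MonoidHom.isIntegral_apply (χ : G →* ℂ) (g : G) : IsIntegral ℤ (χ g) :=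
  IsIntegral.of_pow Nat.card_pos <| by
    rw [← map_pow, pow_card_eq_one', map_one]; exact isIntegral_one

def charSum (D : Finset G) (χ : G →* ℂ) : 𝓡 := ∑ g ∈ D, ⟨χ g, χ.isIntegral_apply g⟩

@[simp]
theorem coe_charSum (D : Finset G) (χ : G →* ℂ) : (charSum D χ : ℂ) = ∑ g ∈ D, χ g := by
  simp [charSum]

end Characters

section Reduction

variable {G : Type*} [CommGroup G] [Finite G] {q n r : ℕ} {A : ℤ} {α : 𝓡}

local notation "π" => Ideal.Quotient.mk (Ideal.span {(q : 𝓡)})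

theorem mk_charSum_pow [Fact q.Prime] (D : Finset G) (χ : G →* ℂ) :
    π (charSum D (χ ^ q)) = π (charSum D χ) ^ q := by
  simp only [charSum, map_sum, sum_pow_char, ← map_pow]
  rfl

theorem mk_natCast_eq_zero (hqr : q ∣ r) : π (r : 𝓡) = 0 := by
  rw [map_natCast, CharP.cast_eq_zero_iff _ q]; exact hqr

theorem mk_add_mk_conj (hsum : α + conjIntegralClosure α = A) :
    π α + π (conjIntegralClosure α) = A := by
  rw [← map_add, hsum, map_intCast]

theorem mk_mul_mk_conj (hqn : q ∣ n) (hprod : α * conjIntegralClosure α = n) :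
    π α * π (conjIntegralClosure α) = 0 := by
  rw [← map_mul, hprod, mk_natCast_eq_zero hqn]

theorem mk_pow_eq_self [Fact q.Prime] (hqn : q ∣ n) (hqr : q ∣ r) (hqA : ¬ (q : ℤ) ∣ A)
    (hsum : α + conjIntegralClosure α = A) (hprod : α * conjIntegralClosure α = n) :
    ∀ t ∈ ({(r : 𝓡), α, conjIntegralClosure α} : Set 𝓡), π t ^ q = π t := by
  have hsum' := mk_add_mk_conj (q := q) hsum
  have hprod' := mk_mul_mk_conj hqn hprod
  rintro t (rfl | rfl | rfl)
  · rw [mk_natCast_eq_zero hqr, zero_pow (Fact.out : q.Prime).ne_zero]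
  · exact pow_char_eq_self_of_add_eq_intCast_of_mul_eq_zero hqA hsum' hprod'
  · exact pow_char_eq_self_of_add_eq_intCast_of_mul_eq_zero hqA
      ((add_comm _ _).trans hsum') ((mul_comm _ _).trans hprod')

theorem injOn_mk [Fact q.Prime] (hqn : q ∣ n) (hqr : q ∣ r) (hqA : ¬ (q : ℤ) ∣ A)
    (hsum : α + conjIntegralClosure α = A) (hprod : α * conjIntegralClosure α = n) :
    Set.InjOn π {(r : 𝓡), α, conjIntegralClosure α} := by
  have hsum' := mk_add_mk_conj (q := q) hsum
  have hr := mk_natCast_eq_zero (q := q) hqr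
  have hA0 : (A : 𝓡 ⧸ Ideal.span {(q : 𝓡)}) ≠ 0 := by
    rwa [Ne, CharP.intCast_eq_zero_iff _ q]
  have hconj : ∀ β : 𝓡, π β = 0 → π (conjIntegralClosure β) = 0 := fun β hβ => by
    rw [Ideal.Quotient.eq_zero_iff_dvd] at hβ ⊢
    simpa using map_dvd conjIntegralClosure hβ
  refine Set.injOn_triple (fun h => hA0 ?_) (fun h => hA0 ?_)
    (ne_of_add_eq_intCast_of_mul_eq_zero hqA hsum' (mk_mul_mk_conj hqn hprod))
  · rw [← hsum', ← h, hr, hconj α (h ▸ hr), add_zero]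
  · rw [← hsum', ← h, hr, ← conjIntegralClosure_conjIntegralClosure α, hconj _ (h ▸ hr),
      zero_add]

theorem charSum_pow_eq [Fact q.Prime] (D : Finset G) {χ : G →* ℂ} (hqn : q ∣ n) (hqr : q ∣ r)
    (hqA : ¬ (q : ℤ) ∣ A) (hsum : α + conjIntegralClosure α = A)
    (hprod : α * conjIntegralClosure α = n)
    (hχ : charSum D χ ∈ ({(r : 𝓡), α, conjIntegralClosure α} : Set 𝓡))
    (hχq : charSum D (χ ^ q) ∈ ({(r : 𝓡), α, conjIntegralClosure α} : Set 𝓡)) :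
    charSum D (χ ^ q) = charSum D χ :=
  injOn_mk hqn hqr hqA hsum hprod hχq hχ <| by
    rw [mk_charSum_pow, mk_pow_eq_self hqn hqr hqA hsum hprod _ hχ]

end Reduction

theorem multiplier_theorem_general {G : Type*} [CommGroup G] [Fintype G] [DecidableEq G]
    (D : Finset G) (v n : ℕ) (hv : Fintype.card G = v)
    (q : ℕ) (hq : q.Prime) (hqn : q ∣ n) (hqv : Nat.Coprime q v)
    (r : ℕ) (hr : r ^ 2 = n)
    (a : ℂ) (hint : IsIntegral ℤ a)
    (ha : a * (starRingEnd ℂ) a = (n : ℂ))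
    (hvals : ∀ χ : G →* ℂ, χ ≠ 1 →
      (∑ d' ∈ D, χ d') ∈ ({(r : ℂ), a, (starRingEnd ℂ) a} : Set ℂ))
    (A : ℤ) (hA : (A : ℂ) = a + (starRingEnd ℂ) a)
    (hΔ : (2 * (r : ℤ) - A) ∣ (v : ℤ)) :
    (∀ χ : G →* ℂ,
      ((∑ d' ∈ D, χ d') = a → (∑ d' ∈ D, χ d' ^ q) = a) ∧
      ((∑ d' ∈ D, χ d') = (starRingEnd ℂ) a →
        (∑ d' ∈ D, χ d' ^ q) = (starRingEnd ℂ) a)) ∧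
      D.image (· ^ q) = D := by
  have := Fact.mk hq
  have hqr : q ∣ r := hq.dvd_of_dvd_pow (hr ▸ hqn)
  have hqA : ¬ (q : ℤ) ∣ A := fun hqA =>
    have hqΔ : (q : ℤ) ∣ 2 * r - A :=
      dvd_sub (dvd_mul_of_dvd_right (Int.natCast_dvd_natCast.mpr hqr) 2) hqA
    hq.one_lt.ne' (hqv.eq_one_of_dvd (Int.natCast_dvd_natCast.mp (hqΔ.trans hΔ)))
  have hcop : (Nat.card G).Coprime q := by rw [Nat.card_eq_fintype_card, hv]; exact hqv.symm
  set α : 𝓡 := ⟨a, hint⟩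
  have hsum : α + conjIntegralClosure α = A := Subtype.ext (by simp [α, hA])
  have hprod : α * conjIntegralClosure α = n := Subtype.ext (by simpa [α] using ha)
  have hmem (χ : G →* ℂ) (hχ : χ ≠ 1) :
      charSum D χ ∈ ({(r : 𝓡), α, conjIntegralClosure α} : Set 𝓡) := by
    simpa [Subtype.ext_iff, α] using hvals χ hχ
  have hfix (χ : G →* ℂ) : ∑ g ∈ D, χ g ^ q = ∑ g ∈ D, χ g := by
    rcases eq_or_ne χ 1 with rfl | hχ
    · simp
    simpa using congrArg Subtype.val (charSum_pow_eq D hqn hqr hqA hsum hprod (hmem χ hχ)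
      (hmem _ (χ.pow_ne_one_of_coprime_card hχ hcop)))
  refine ⟨fun χ => ⟨(hfix χ).trans, (hfix χ).trans⟩, Finset.eq_of_forall_sum_monoidHom_eq ?_⟩
  intro χ
  rw [sum_image fun x _ y _ (h : x ^ q = y ^ q) => (powCoprime hcop).injective h]
  simpa using hfix χ

/-- Let `D` be a `(v,k,λ)` difference set of order `n = k - λ` in a finite abelian
group `G`, and `q` a prime dividing `n` with `gcd(q,v) = 1`. Suppose the nontrivial
character values of `D` lie in `{√n, a, ā}` with `a` a non-real algebraic integer of
an imaginary quadratic field `ℚ(√d)` (`d < 0` squarefree), `a·ā = n`, and suppose the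
integer `Δ = 2√n - (a + ā)` divides `v`. Then `σ_q` fixes `a` and `ā` (i.e. raising
character values to `q`-th powers fixes them), and consequently `D^{(q)} = D`, i.e.
`q` is a multiplier of `D`. -/
theorem multiplier_theorem {G : Type*} [CommGroup G] [Fintype G] [DecidableEq G]
    (D : Finset G) (v k lam n : ℕ) (hv : Fintype.card G = v)
    (hk : D.card = k) (hDS : IsDiffSet D lam) (hlk : lam < k) (hn : n = k - lam)
    (q : ℕ) (hq : q.Prime) (hqn : q ∣ n) (hqv : Nat.Coprime q v)
    (r : ℕ) (hr : r ^ 2 = n)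
    (d : ℤ) (hd : Squarefree d) (hdneg : d < 0)
    (a : ℂ) (hint : IsIntegral ℤ a)
    (hmem : a ∈ Algebra.adjoin ℚ ({Complex.I * Real.sqrt (-d : ℤ)} : Set ℂ))
    (ha : a * (starRingEnd ℂ) a = (n : ℂ)) (haa : a ≠ (starRingEnd ℂ) a)
    (hvals : ∀ χ : G →* ℂ, χ ≠ 1 →
      (∑ d' ∈ D, χ d') ∈ ({(r : ℂ), a, (starRingEnd ℂ) a} : Set ℂ))
    (A : ℤ) (hA : (A : ℂ) = a + (starRingEnd ℂ) a)
    (hΔ : (2 * (r : ℤ) - A) ∣ (v : ℤ)) :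
    (∀ χ : G →* ℂ,
      ((∑ d' ∈ D, χ d') = a → (∑ d' ∈ D, χ d' ^ q) = a) ∧
      ((∑ d' ∈ D, χ d') = (starRingEnd ℂ) a →
        (∑ d' ∈ D, χ d' ^ q) = (starRingEnd ℂ) a)) ∧
      D.image (· ^ q) = D :=
  multiplier_theorem_general D v n hv q hq hqn hqv r hr a hint ha hvals A hA hΔ
end

section
/- Let D be a Hadamard difference set with parameters (v,k,λ) = (4n, 2n - √n, n - √n) in an abelian group G, with three nontrivial character values √n, a, ā satisfying a + ā = 0. Let H = G + 1_G - D - D^{(-1)} as a subset of G. Then H² = (2√n - 1)·1_G + (2 - 2√n)·H + 2·G in ℤ[G], and consequently √n ≤ 2. -/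
/-!
At a character `χ`, `H` takes the value `|G| + 1 - 2k = 2√n + 1` if `χ = 1`, `1 - 2√n` if
`χ(D) = √n`, and `1` if `χ(D) ∈ {a, ā}` (as `a + ā = 0`). Each nontrivial value `z` satisfies
`z² = (2√n - 1) + (2 - 2√n) z`, the trivial one the same identity up to `2|G|`, and characters
separate the elements of `ℤ[G]`; this gives the formula for `H²`.

For the bound, `H` is symmetric, so the coefficient of `1` in `H²` is `∑ H(g)²`. Comparing with
`∑ H(g) = 2√n + 1`, using `t ≤ t²` on `ℤ` and `H(1) ∈ {0, 2}`, forces `H(1) = 0` and all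
coefficients of `H` to lie in `{0, 1}` once `√n > 2`. Then `H` contains some `g ≠ 1`, and the
coefficient `4 - 2√n` of `g` in `H²` would be negative.
-/

open Finset

theorem Int.eq_zero_or_eq_one_of_sum_sq_eq_sum {ι : Type*} {s : Finset ι} {f : ι → ℤ}
    (h : ∑ i ∈ s, f i ^ 2 = ∑ i ∈ s, f i) {i : ι} (hi : i ∈ s) : f i = 0 ∨ f i = 1 := by
  have hsum : ∑ j ∈ s, (f j ^ 2 - f j) = 0 := by rw [sum_sub_distrib, h, sub_self]
  have hi' : f i ^ 2 - f i = 0 :=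
    (sum_eq_zero_iff_of_nonneg fun j _ => sub_nonneg.mpr (Int.le_self_sq (f j))).mp hsum i hi
  have : f i * (f i - 1) = 0 := by linear_combination hi'
  rcases mul_eq_zero.mp this with h0 | h1
  · exact .inl h0
  · exact .inr (by linarith)

theorem MonoidHom.map_inv_eq_conj {G : Type*} [CommGroup G] [Finite G] (χ : G →* ℂ) (g : G) :
    χ g⁻¹ = starRingEnd ℂ (χ g) :=
  AddChar.map_neg_eq_conj (AddChar.toMonoidHomEquiv.symm χ) (Additive.ofMul g)

namespace MonoidAlgebra

@[simp]
theorem coeff_sum_single_one_s17 {G R : Type*} [Fintype G] [Semiring R] (g : G) :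
    (∑ h : G, single h (1 : R)).coeff g = 1 := by
  classical
  simp [Finsupp.single_apply]

section Group

variable {G : Type*} [Group G] [Fintype G]

theorem coeff_mul_eq_sum {R : Type*} [Semiring R] (x y : MonoidAlgebra R G) (g : G) :
    (x * y).coeff g = ∑ h : G, x.coeff h * y.coeff (h⁻¹ * g) := by
  rw [coeff_mul_apply_left, Finsupp.sum_fintype _ _ fun _ => zero_mul _]

theorem coeff_sq_one_of_coeff_inv {R : Type*} [Semiring R] {x : MonoidAlgebra R G}
    (hx : ∀ g, x.coeff g⁻¹ = x.coeff g) : (x ^ 2).coeff 1 = ∑ g : G, x.coeff g ^ 2 := by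
  simp [sq, coeff_mul_eq_sum, hx]

theorem coeff_sq_nonneg {R : Type*} [Semiring R] [PartialOrder R] [IsOrderedRing R]
    {x : MonoidAlgebra R G} (hx : ∀ g, 0 ≤ x.coeff g) (g : G) : 0 ≤ (x ^ 2).coeff g := by
  rw [sq, coeff_mul_eq_sum]
  exact sum_nonneg fun h _ => mul_nonneg (hx h) (hx _)

theorem lift_apply_eq_sum {A : Type*} [Ring A] (χ : G →* A) (x : MonoidAlgebra ℤ G) :
    lift ℤ A G χ x = ∑ g, (x.coeff g : A) * χ g := by
  rw [lift_apply, Finsupp.sum_fintype _ _ fun _ => zero_smul ℤ (χ _)]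
  simp only [zsmul_eq_mul]

theorem lift_sum_single_one_of_ne_one {χ : G →* ℂ} (hχ : χ ≠ 1) :
    lift ℤ ℂ G χ (∑ g : G, single g 1) = 0 := by
  simpa using sum_hom_units_eq_zero χ hχ

theorem le_two_of_sq_eq {x : MonoidAlgebra ℤ G} {r : ℤ}
    (hinv : ∀ g, x.coeff g⁻¹ = x.coeff g) (hone : 0 ≤ x.coeff 1)
    (hsum : ∑ g : G, x.coeff g = 2 * r + 1)
    (hsq : x ^ 2 = (2 * r - 1) • (1 : MonoidAlgebra ℤ G) + (2 - 2 * r) • x +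
      (2 : ℤ) • ∑ g : G, single g (1 : ℤ)) :
    r ≤ 2 := by
  classical
  have hcoeff (g : G) : (x ^ 2).coeff g =
      (2 * r - 1) * (if g = 1 then 1 else 0) + (2 - 2 * r) * x.coeff g + 2 := by
    simp only [hsq, coeff_add, Finsupp.add_apply, coeff_smul_apply, coeff_sum_single_one_s17, one_def,
      coeff_single, Finsupp.single_apply, smul_eq_mul, eq_comm (a := (1 : G))]
    ring
  by_contra! hr
  have hsq_sum : ∑ g : G, x.coeff g ^ 2 = 2 * r + 1 + (2 - 2 * r) * x.coeff 1 := by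
    rw [← coeff_sq_one_of_coeff_inv hinv, hcoeff, if_pos rfl]
    ring
  have hone_zero : x.coeff 1 = 0 := by
    have : ∑ g : G, x.coeff g ≤ ∑ g : G, x.coeff g ^ 2 :=
      sum_le_sum fun g _ => Int.le_self_sq _
    nlinarith
  have hzero_one (g : G) : x.coeff g = 0 ∨ x.coeff g = 1 :=
    Int.eq_zero_or_eq_one_of_sum_sq_eq_sum (by rw [hsq_sum, hsum, hone_zero]; ring) (mem_univ g)
  obtain ⟨g, hg1, hg⟩ : ∃ g ≠ 1, x.coeff g = 1 := by
    by_contra! hno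
    have : ∑ g : G, x.coeff g = x.coeff 1 :=
      sum_eq_single 1 (fun g _ hg => (hzero_one g).resolve_right (hno g hg)) (by simp)
    omega
  have hnonneg (g : G) : 0 ≤ x.coeff g := by rcases hzero_one g with h | h <;> omega
  have := coeff_sq_nonneg hnonneg g
  rw [hcoeff, if_neg hg1, hg] at this
  linarith

end Group

theorem eq_of_forall_lift_eq {G : Type*} [CommGroup G] [Fintype G] {x y : MonoidAlgebra ℤ G}
    (h : ∀ χ : G →* ℂ, lift ℤ ℂ G χ x = lift ℤ ℂ G χ y) : x = y := by
  classical
  rw [← sub_eq_zero, ← coeff_eq_zero]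
  ext g
  set z := x - y
  have hz (ψ : AddChar (Additive G) ℂ) : ∑ h : G, (z.coeff h : ℂ) * ψ (.ofMul h) = 0 := by
    have := h ψ.toMonoidHom
    rw [← sub_eq_zero, ← map_sub] at this
    exact (lift_apply_eq_sum _ _).symm.trans this
  -- Fourier inversion, by orthogonality of the characters of `Additive G`
  have : (Fintype.card G : ℂ) * z.coeff g = 0 := calc
    _ = ∑ h : G, (z.coeff h : ℂ) * ∑ ψ : AddChar (Additive G) ℂ, ψ (.ofMul h - .ofMul g) := by
      simp_rw [AddChar.sum_apply_eq_ite, sub_eq_zero, EmbeddingLike.apply_eq_iff_eq, mul_ite,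
        mul_zero, sum_ite_eq', mem_univ, if_true, Fintype.card_congr Additive.ofMul, mul_comm]
    _ = ∑ ψ : AddChar (Additive G) ℂ, ψ (-.ofMul g) * ∑ h : G, (z.coeff h : ℂ) * ψ (.ofMul h) := by
      simp_rw [mul_sum, sub_eq_add_neg, AddChar.map_add_eq_mul]
      rw [sum_comm]
      exact sum_congr rfl fun _ _ => sum_congr rfl fun _ _ => by ring
    _ = 0 := by simp [hz]
  simpa using this

end MonoidAlgebra

open MonoidAlgebra

section Group

variable {G : Type*} [Group G] [Fintype G]

/-- `G + 1 - D - D⁽⁻¹⁾` in `ℤ[G]`, a subset standing for the sum of its elements. -/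
noncomputable def hadamardH (D : Finset G) : MonoidAlgebra ℤ G :=
  (∑ g : G, single g (1 : ℤ)) + 1 - (∑ d ∈ D, single d (1 : ℤ)) - (∑ d ∈ D, single d⁻¹ (1 : ℤ))

theorem coeff_hadamardH [DecidableEq G] (D : Finset G) (g : G) :
    (hadamardH D).coeff g =
      1 + (if g = 1 then 1 else 0) - (if g ∈ D then 1 else 0) - (if g⁻¹ ∈ D then 1 else 0) := by
  simp only [hadamardH, coeff_sub, coeff_add, coeff_sum, coeff_single, one_def, Finsupp.sub_apply,
    Finsupp.add_apply, Finsupp.finsetSum_apply, Finsupp.single_apply, inv_eq_iff_eq_inv,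
    sum_ite_eq', mem_univ, if_true, eq_comm (a := (1 : G))]

theorem coeff_hadamardH_inv (D : Finset G) (g : G) :
    (hadamardH D).coeff g⁻¹ = (hadamardH D).coeff g := by
  classical
  rw [coeff_hadamardH, coeff_hadamardH, inv_inv, inv_eq_one]
  ring

theorem coeff_hadamardH_one_nonneg (D : Finset G) : 0 ≤ (hadamardH D).coeff 1 := by
  classical
  rw [coeff_hadamardH, inv_one, if_pos rfl]
  split_ifs <;> norm_num

theorem sum_coeff_hadamardH (D : Finset G) :
    ∑ g : G, (hadamardH D).coeff g = Fintype.card G + 1 - 2 * D.card := by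
  classical
  have hinv : ∑ g : G, (if g⁻¹ ∈ D then 1 else 0 : ℤ) = D.card := by
    rw [Fintype.sum_equiv (Equiv.inv G) (fun g => if g⁻¹ ∈ D then 1 else 0)
      (fun g => if g ∈ D then 1 else 0) fun _ => rfl]
    simp
  simp only [coeff_hadamardH, sum_sub_distrib, sum_add_distrib, hinv, sum_const, card_univ,
    Int.nsmul_eq_mul, mul_one, sum_ite_eq', mem_univ, if_true, sum_ite_mem, univ_inter]
  ring

end Group

section CommGroup

variable {G : Type*} [CommGroup G] [Fintype G]

theorem lift_hadamardH (D : Finset G) (χ : G →* ℂ) :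
    lift ℤ ℂ G χ (hadamardH D) = lift ℤ ℂ G χ (∑ g : G, single g 1) + 1
      - ∑ d ∈ D, χ d - starRingEnd ℂ (∑ d ∈ D, χ d) := by
  simp [hadamardH, map_sum, MonoidHom.map_inv_eq_conj]

theorem hadamardH_sq {D : Finset G} {r : ℕ} {a : ℂ} (haa : a + starRingEnd ℂ a = 0)
    (hcard : (Fintype.card G : ℤ) = 4 * r ^ 2) (hD : (D.card : ℤ) = 2 * r ^ 2 - r)
    (hvals : ∀ χ : G →* ℂ, χ ≠ 1 → ∑ d ∈ D, χ d ∈ ({(r : ℂ), a, starRingEnd ℂ a} : Set ℂ)) :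
    hadamardH D ^ 2 = (2 * (r : ℤ) - 1) • (1 : MonoidAlgebra ℤ G) +
      (2 - 2 * (r : ℤ)) • hadamardH D + (2 : ℤ) • ∑ g : G, single g (1 : ℤ) := by
  refine eq_of_forall_lift_eq fun χ => ?_
  simp only [map_pow, map_add, map_zsmul, map_one, lift_hadamardH]
  by_cases hχ : χ = 1
  · subst hχ
    have hcardC : (Fintype.card G : ℂ) = 4 * r ^ 2 := by exact_mod_cast hcard
    have hDC : (D.card : ℂ) = 2 * r ^ 2 - r := by exact_mod_cast hD
    simp only [lift_apply_eq_sum, MonoidHom.one_apply, coeff_sum_single_one_s17, Int.cast_one,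
      mul_one, sum_const, card_univ, nsmul_eq_mul, map_natCast, zsmul_eq_mul]
    rw [hcardC, hDC]
    push_cast
    ring
  · rw [lift_sum_single_one_of_ne_one hχ]
    obtain hz | hz | hz := hvals χ hχ
    · rw [hz, map_natCast]
      simp only [zsmul_eq_mul]
      push_cast
      ring
    · rw [hz]
      linear_combination (a + starRingEnd ℂ a - 2 * (r : ℂ)) * haa
    · rw [hz, Complex.conj_conj]
      linear_combination (starRingEnd ℂ a + a - 2 * (r : ℂ)) * haa

end CommGroup

theorem hadamard_minus_case_general {G : Type*} [CommGroup G] [Fintype G]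
    (D : Finset G) (v k n r : ℕ) (hr : r ^ 2 = n)
    (hv : Fintype.card G = v) (hk : D.card = k)
    (hv4 : v = 4 * n) (hkn : k = 2 * n - r)
    (a : ℂ) (haa : a + (starRingEnd ℂ) a = 0)
    (hvals : {z : ℂ | ∃ χ : G →* ℂ, χ ≠ 1 ∧ ∑ d ∈ D, χ d = z}
      = {(r : ℂ), a, (starRingEnd ℂ) a})
    (H : MonoidAlgebra ℤ G)
    (hH : H = (∑ g : G, MonoidAlgebra.single g (1 : ℤ)) + 1 -
        (∑ d ∈ D, MonoidAlgebra.single d (1 : ℤ)) -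
        (∑ d ∈ D, MonoidAlgebra.single d⁻¹ (1 : ℤ))) :
    H ^ 2 = (2 * (r : ℤ) - 1) • (1 : MonoidAlgebra ℤ G) +
        (2 - 2 * (r : ℤ)) • H +
        (2 : ℤ) • (∑ g : G, MonoidAlgebra.single g (1 : ℤ)) ∧
      r ≤ 2 := by
  obtain rfl : H = hadamardH D := hH
  have hcard : (Fintype.card G : ℤ) = 4 * r ^ 2 := by rw [hv, hv4, ← hr]; push_cast; ring
  have hD : (D.card : ℤ) = 2 * r ^ 2 - r := by
    rw [hk, hkn, ← hr, Nat.cast_sub (by nlinarith)]; push_cast; ring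
  have hsq := hadamardH_sq haa hcard hD fun χ hχ => hvals ▸ ⟨χ, hχ, rfl⟩
  have hsum : ∑ g : G, (hadamardH D).coeff g = 2 * r + 1 := by
    rw [sum_coeff_hadamardH, hcard, hD]; ring
  refine ⟨hsq, ?_⟩
  exact_mod_cast le_two_of_sq_eq (coeff_hadamardH_inv D) (coeff_hadamardH_one_nonneg D) hsum hsq

/-- Let `D` be a Hadamard difference set with parameters `(4n, 2n-√n, n-√n)` in an
abelian group `G`, with exactly three nontrivial character values `√n, a, ā` where
`a + ā = 0`. With `H = G + 1 - D - D^{(-1)}` in `ℤ[G]`, one has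
`H² = (2√n - 1)·1 + (2 - 2√n)·H + 2·G`, and consequently `√n ≤ 2`. -/
theorem hadamard_minus_case {G : Type*} [CommGroup G] [Fintype G] [DecidableEq G]
    (D : Finset G) (v k lam n r : ℕ) (hr : r ^ 2 = n) (hrpos : 0 < r)
    (hv : Fintype.card G = v) (hk : D.card = k) (hDS : IsDiffSet D lam)
    (hv4 : v = 4 * n) (hkn : k = 2 * n - r) (hlam : lam = n - r)
    (a : ℂ) (ha : a * (starRingEnd ℂ) a = (n : ℂ)) (haa : a + (starRingEnd ℂ) a = 0)
    (hvals : {z : ℂ | ∃ χ : G →* ℂ, χ ≠ 1 ∧ ∑ d ∈ D, χ d = z}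
      = {(r : ℂ), a, (starRingEnd ℂ) a})
    (h3 : ({(r : ℂ), a, (starRingEnd ℂ) a} : Set ℂ).ncard = 3)
    (H : MonoidAlgebra ℤ G)
    (hH : H = (∑ g : G, MonoidAlgebra.single g (1 : ℤ)) + 1 -
        (∑ d ∈ D, MonoidAlgebra.single d (1 : ℤ)) -
        (∑ d ∈ D, MonoidAlgebra.single d⁻¹ (1 : ℤ))) :
    H ^ 2 = (2 * (r : ℤ) - 1) • (1 : MonoidAlgebra ℤ G) +
        (2 - 2 * (r : ℤ)) • H +
        (2 : ℤ) • (∑ g : G, MonoidAlgebra.single g (1 : ℤ)) ∧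
      r ≤ 2 :=
  hadamard_minus_case_general D v k n r hr hv hk hv4 hkn a haa hvals H hH
end

section
/- Let D be a difference set in a finite abelian group G with exactly three nontrivial character values √n, a, ā, and suppose M = {χ₀} ∪ {χ : χ(D) = √n} is a subgroup of Ĝ. Then v = 2(k - √n), and the parameters are (v,k,λ) = (4n, 2n + √n, n + √n); moreover a + ā = 0. -/
/-!
Write `S χ = ∑ d ∈ D, χ d`. Off the trivial character, `S χ + conj (S χ)` is `2√n` on `M` and
`a + ā` elsewhere, so Fourier inversion of `D + D⁻¹` gives, for every `g`,
`v ([g ∈ D] + [g⁻¹ ∈ D]) = (a + ā) v [g = 1] + (2√n - (a + ā)) T g + 2 (k - √n)`,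
where `T g = ∑ χ ∈ M, χ g` is `|M|` on the annihilator of `M` and `0` off it, since `M` is closed
under multiplication. A point `g ≠ 1` off the annihilator gives `v = 2 (k - √n)`, and then
`k² = k + (v - 1) λ` gives the parameters. A point `g ≠ 1` of the annihilator (it exists because
`M` is proper) gives `(2√n - (a + ā)) |M| = v`, and then `g = 1` gives `a + ā ∈ {0, -2}`. In the
second case `(√n + 1) |M| = 2n` with `n > 1` (as `a` is not real and `|a|² = n`), impossible since
`√n + 1 > 2` is coprime to `√n`.
-/

open Finset

open scoped ComplexConjugate

theorem IsDiffSet.card_mul_card {G : Type*} [Group G] [Fintype G] [DecidableEq G]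
    {D : Finset G} {l : ℕ} (hD : IsDiffSet D l) :
    #D * #D = #D + (Fintype.card G - 1) * l := by
  have hdiag : (D ×ˢ D).filter (fun p => p.1 * p.2⁻¹ = 1) = D.diag := by
    simp only [mul_inv_eq_one, diag_eq_filter]
  rw [← card_product, card_eq_sum_card_fiberwise (f := fun p => p.1 * p.2⁻¹) (t := univ)
    (fun _ _ => mem_univ _), ← add_sum_erase _ _ (mem_univ 1), hdiag, diag_card,
    sum_congr rfl fun g hg => hD g (ne_of_mem_erase hg), sum_const,
    card_erase_of_mem (mem_univ _), card_univ, smul_eq_mul]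

theorem Nat.succ_not_dvd_two_mul_sq {r : ℕ} (hr : 1 < r) : ¬ (r + 1) ∣ 2 * r ^ 2 := by
  intro h
  have hsplit : 2 * r ^ 2 = (r + 1) * (2 * r - 2) + 2 := by
    obtain ⟨s, rfl⟩ : ∃ s, r = s + 1 := ⟨r - 1, by omega⟩
    simp only [show 2 * (s + 1) - 2 = 2 * s by omega]
    ring
  rw [hsplit] at h
  have := Nat.le_of_dvd two_pos ((Nat.dvd_add_right (dvd_mul_right _ _)).1 h)
  omega

theorem Complex.re_sq_lt_of_mul_conj_eq {a : ℂ} {x : ℝ} (ha : a * conj a = x)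
    (h : a ≠ conj a) : a.re ^ 2 < x := by
  rw [Complex.mul_conj, Complex.ofReal_inj, Complex.normSq_apply] at ha
  have him : a.im ≠ 0 := fun him => h (Complex.conj_eq_iff_im.2 him).symm
  nlinarith [mul_self_pos.2 him]

theorem params_of_card_eq_two_mul_sub {v k lam n r : ℕ}
    (hcount : k * k = k + (v - 1) * lam) (hn : n = k - lam) (hr : r ^ 2 = n) (hlk : lam < k)
    (hrk : r < k) (hvk : (v : ℤ) = 2 * (k - r)) :
    v = 4 * n ∧ k = 2 * n + r ∧ lam = n + r := by
  have hv : 1 ≤ v := by omega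
  zify [hv, hlk.le] at hcount hn
  have hsq : (r : ℤ) ^ 2 = k - lam := by rw [← hn]; exact_mod_cast hr
  have hfactor : ((k : ℤ) - r) * ((k : ℤ) + r - 2 * lam) = 0 := by
    linear_combination hcount - hsq + (lam : ℤ) * hvk
  have hklam : (k : ℤ) + r = 2 * lam := by
    rcases mul_eq_zero.1 hfactor with h | h
    · omega
    · linarith
  omega

theorem card_eq_two_mul_sub_of_mul_eq {v k r : ℕ} {c : ℝ} (h : (v : ℝ) * c = 2 * (k - r))
    (hc : c = 0 ∨ c = 1 ∨ c = 2) (hr : 0 < r) (hrk : r < k) (hkv : k ≤ v) :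
    (v : ℝ) = 2 * (k - r) := by
  have : (0 : ℝ) < r := by exact_mod_cast hr
  have : (r : ℝ) < k := by exact_mod_cast hrk
  have : (k : ℝ) ≤ v := by exact_mod_cast hkv
  rcases hc with rfl | rfl | rfl <;> linarith

theorem eq_zero_of_mul_eq_of_sq_lt {σ c₁ c₂ : ℝ} {v r m : ℕ} (hσ : σ ^ 2 < r ^ 2)
    (hv : v = 4 * r ^ 2) (hm : 0 < m)
    (h₁ : (v : ℝ) * c₁ = (2 * r - 2 * σ) * m + v) (hc₁ : c₁ = 0 ∨ c₁ = 1 ∨ c₁ = 2)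
    (h₂ : (v : ℝ) * c₂ = 2 * σ * v + (2 * r - 2 * σ) * m + v) (hc₂ : c₂ = 0 ∨ c₂ = 2) :
    σ = 0 := by
  have habs : |σ| < r := abs_lt_of_sq_lt_sq hσ (Nat.cast_nonneg r)
  have hvpos : (0 : ℝ) < v := by
    rw [hv]; push_cast; nlinarith [(abs_nonneg σ).trans_lt habs]
  have hgap : 0 < (2 * r - 2 * σ) * m :=
    mul_pos (by linarith [le_abs_self σ]) (by exact_mod_cast hm)
  obtain rfl : c₁ = 2 := by rcases hc₁ with rfl | rfl | rfl <;> [nlinarith; nlinarith; rfl]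
  rcases hc₂ with rfl | rfl
  · obtain rfl : σ = -1 := by nlinarith
    have hcast : ((r + 1) * m : ℕ) = 2 * r ^ 2 := by
      have : ((r + 1) * m : ℝ) = 2 * r ^ 2 := by rw [hv] at h₁; push_cast at h₁; linarith
      exact_mod_cast this
    have hr1 : 1 < r := by exact_mod_cast (show (1 : ℝ) < r by simpa using habs)
    exact (Nat.succ_not_dvd_two_mul_sq hr1 ⟨m, hcast.symm⟩).elim
  · nlinarith

theorem Finset.sum_apply_eq_ite_of_mul_mem {G R : Type*} [Group G] [CommRing R] [IsDomain R]
    [DecidableEq R] {s : Finset (G →* R)} (hs : ∀ χ ∈ s, ∀ ψ ∈ s, χ * ψ ∈ s) (g : G) :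
    ∑ χ ∈ s, χ g = if ∀ χ ∈ s, χ g = 1 then (#s : R) else 0 := by
  classical
  split_ifs with h
  · simp [sum_congr rfl h]
  obtain ⟨χ₀, hχ₀, hg⟩ : ∃ χ₀ ∈ s, χ₀ g ≠ 1 := by simpa using h
  have hinj : Function.Injective (χ₀ * ·) := fun χ ψ hχψ => MonoidHom.ext fun x =>
    mul_left_cancel₀ ((Group.isUnit x).map χ₀).ne_zero (DFunLike.congr_fun hχψ x)
  have himage : s.image (χ₀ * ·) = s :=
    eq_of_subset_of_card_le (image_subset_iff.2 fun χ hχ => hs χ₀ hχ₀ χ hχ)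
      (card_image_of_injective s hinj).ge
  have hfix : χ₀ g * ∑ χ ∈ s, χ g = ∑ χ ∈ s, χ g := by
    conv_rhs => rw [← himage, sum_image hinj.injOn]
    simp [mul_sum]
  by_contra hne
  exact hg ((mul_eq_right₀ hne).1 hfix)

theorem Finset.exists_ne_one_forall_apply_eq_one {G R : Type*} [Group G] [Fintype G]
    [CommRing R] [IsDomain R] [CharZero R] {s : Finset (G →* R)}
    (hs : ∀ χ ∈ s, ∀ ψ ∈ s, χ * ψ ∈ s) (h1 : 1 ∈ s) (hcard : #s < Fintype.card G) :
    ∃ g ≠ 1, ∀ χ ∈ s, χ g = 1 := by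
  classical
  by_contra! h
  have hsum : ∑ g : G, ∑ χ ∈ s, χ g = Fintype.card G := by
    rw [sum_comm]
    simp_rw [sum_hom_units]
    simp [h1]
  rw [sum_eq_single (1 : G) (fun g _ hg => by
    obtain ⟨χ, hχ, hχg⟩ := h g hg
    rw [sum_apply_eq_ite_of_mul_mem hs, if_neg fun hall => hχg (hall χ hχ)]) (by simp)] at hsum
  simp only [map_one, sum_const, nsmul_eq_mul, mul_one, Nat.cast_inj] at hsum
  omega

section Dual

variable {G : Type*} [CommGroup G]

instance CommGroup.finite_monoidHom_complex [Finite G] : Finite (G →* ℂ) :=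
  Nat.finite_of_card_ne_zero <| by
    rw [Nat.card_congr MonoidHom.toHomUnitsMulEquiv.toEquiv,
      CommGroup.card_monoidHom_of_hasEnoughRootsOfUnity]
    exact Nat.card_pos.ne'

theorem CommGroup.card_monoidHom_complex [Fintype G] [Fintype (G →* ℂ)] :
    Fintype.card (G →* ℂ) = Fintype.card G := by
  rw [← Nat.card_eq_fintype_card, ← Nat.card_eq_fintype_card,
    Nat.card_congr MonoidHom.toHomUnitsMulEquiv.toEquiv,
    CommGroup.card_monoidHom_of_hasEnoughRootsOfUnity]

theorem CommGroup.exists_monoidHom_complex_apply_ne_one [Finite G] {x : G} (hx : x ≠ 1) :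
    ∃ χ : G →* ℂ, χ x ≠ 1 := by
  obtain ⟨φ, hφ⟩ := CommGroup.exists_apply_ne_one_of_hasEnoughRootsOfUnity G ℂ hx
  exact ⟨(Units.coeHom ℂ).comp φ, by simpa using hφ⟩

theorem MonoidHom.apply_inv_eq_conj [Finite G] (χ : G →* ℂ) (g : G) :
    χ g⁻¹ = conj (χ g) := by
  have hpow : χ g ^ Nat.card G = 1 := by rw [← map_pow, pow_card_eq_one', map_one]
  rw [map_inv, Complex.inv_eq_conj (Complex.norm_eq_one_of_pow_eq_one hpow Nat.card_pos.ne')]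

variable [Fintype G] [DecidableEq G] [Fintype (G →* ℂ)]

theorem CommGroup.sum_monoidHom_complex_apply (x : G) :
    ∑ χ : G →* ℂ, χ x = if x = 1 then (Fintype.card G : ℂ) else 0 := by
  rw [sum_apply_eq_ite_of_mul_mem (fun _ _ _ _ => mem_univ _), card_univ,
    card_monoidHom_complex]
  by_cases hx : x = 1
  · simp [hx]
  obtain ⟨χ, hχ⟩ := exists_monoidHom_complex_apply_ne_one hx
  rw [if_neg fun h => hχ (h χ (mem_univ χ)), if_neg hx]

theorem CommGroup.sum_monoidHom_complex_sum_mul_apply_inv (D : Finset G) (g : G) :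
    ∑ χ : G →* ℂ, (∑ d ∈ D, χ d) * χ g⁻¹ = if g ∈ D then (Fintype.card G : ℂ) else 0 := by
  simp_rw [sum_mul, ← map_mul]
  rw [sum_comm]
  simp_rw [sum_monoidHom_complex_apply, mul_inv_eq_one]
  exact sum_ite_eq' D g _

end Dual

section AddInvCoeff

variable {G : Type*} [Group G] [DecidableEq G]

/-- The coefficient of `g` in the group-ring element `D + D⁻¹`. -/
def addInvCoeff (D : Finset G) (g : G) : ℝ := (if g ∈ D then 1 else 0) + (if g⁻¹ ∈ D then 1 else 0)

theorem addInvCoeff_eq_zero_or_one_or_two (D : Finset G) (g : G) :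
    addInvCoeff D g = 0 ∨ addInvCoeff D g = 1 ∨ addInvCoeff D g = 2 := by
  unfold addInvCoeff
  split_ifs <;> norm_num

theorem addInvCoeff_one_eq_zero_or_two (D : Finset G) :
    addInvCoeff D 1 = 0 ∨ addInvCoeff D 1 = 2 := by
  simp only [addInvCoeff, inv_one]
  split_ifs <;> norm_num

end AddInvCoeff

section Spectrum

variable {G : Type*} [CommGroup G] {D : Finset G} {M : Finset (G →* ℂ)} {r : ℕ} {a : ℂ}

theorem sum_add_conj_sum_eq [DecidableEq (G →* ℂ)] (hM : ∀ χ, χ ∈ M ↔ χ = 1 ∨ ∑ d ∈ D, χ d = r)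
    (hvals : ∀ χ : G →* ℂ, χ ≠ 1 →
      ∑ d ∈ D, χ d = r ∨ ∑ d ∈ D, χ d = a ∨ ∑ d ∈ D, χ d = conj a)
    (χ : G →* ℂ) :
    ∑ d ∈ D, χ d + conj (∑ d ∈ D, χ d) =
      2 * a.re + (2 * r - 2 * a.re) * (if χ ∈ M then 1 else 0)
        + (2 * #D - 2 * r) * (if χ = 1 then 1 else 0) := by
  rcases eq_or_ne χ 1 with rfl | hχ
  · simp [(hM 1).2 (Or.inl rfl)]
    ring
  by_cases hχM : χ ∈ M
  · have hr : ∑ d ∈ D, χ d = r := ((hM χ).1 hχM).resolve_left hχ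
    simp [hχM, hχ, hr]
    ring
  have hr : ∑ d ∈ D, χ d ≠ r := fun h => hχM ((hM χ).2 (Or.inr h))
  have hadd : a + conj a = 2 * a.re := by rw [Complex.add_conj]; push_cast; ring
  rcases (hvals χ hχ).resolve_left hr with h | h
  · simp [hχM, hχ, h, hadd]
  · simp [hχM, hχ, h, add_comm (conj a), hadd]

variable [Fintype G] [DecidableEq G] [Fintype (G →* ℂ)]

theorem card_mul_addInvCoeff (hM : ∀ χ, χ ∈ M ↔ χ = 1 ∨ ∑ d ∈ D, χ d = r)
    (hvals : ∀ χ : G →* ℂ, χ ≠ 1 →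
      ∑ d ∈ D, χ d = r ∨ ∑ d ∈ D, χ d = a ∨ ∑ d ∈ D, χ d = conj a)
    (hMmul : ∀ χ ∈ M, ∀ ψ ∈ M, χ * ψ ∈ M) (g : G) :
    (Fintype.card G : ℝ) * addInvCoeff D g =
      2 * a.re * (if g = 1 then (Fintype.card G : ℝ) else 0)
        + (2 * r - 2 * a.re) * (if ∀ χ ∈ M, χ g = 1 then (#M : ℝ) else 0)
        + 2 * (#D - r) := by
  classical
  apply Complex.ofReal_injective
  unfold addInvCoeff
  push_cast
  have hconj : ∑ χ : G →* ℂ, conj (∑ d ∈ D, χ d) * χ g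
      = conj (∑ χ : G →* ℂ, (∑ d ∈ D, χ d) * χ g⁻¹) := by
    rw [map_sum]
    simp_rw [map_mul, ← MonoidHom.apply_inv_eq_conj, inv_inv]
  calc _ = ∑ χ : G →* ℂ, (∑ d ∈ D, χ d + conj (∑ d ∈ D, χ d)) * χ g := by
          rw [sum_congr rfl fun χ _ => add_mul _ _ _, sum_add_distrib, hconj, ← inv_inv g,
            CommGroup.sum_monoidHom_complex_sum_mul_apply_inv, inv_inv,
            CommGroup.sum_monoidHom_complex_sum_mul_apply_inv, apply_ite conj,
            Complex.conj_natCast, map_zero]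
          split_ifs <;> push_cast <;> ring
    _ = _ := by
          simp only [sum_add_conj_sum_eq hM hvals, add_mul, sum_add_distrib, mul_assoc, ← mul_sum,
            mul_ite, mul_one, mul_zero, ite_mul, zero_mul, sum_ite_mem, univ_inter, sum_ite_eq',
            mem_univ, if_true, MonoidHom.one_apply, CommGroup.sum_monoidHom_complex_apply,
            sum_apply_eq_ite_of_mul_mem hMmul]
          split_ifs <;> push_cast <;> ring

theorem card_eq_two_mul_sub_of_mem (hM : ∀ χ, χ ∈ M ↔ χ = 1 ∨ ∑ d ∈ D, χ d = r)
    (hvals : ∀ χ : G →* ℂ, χ ≠ 1 →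
      ∑ d ∈ D, χ d = r ∨ ∑ d ∈ D, χ d = a ∨ ∑ d ∈ D, χ d = conj a)
    (hMmul : ∀ χ ∈ M, ∀ ψ ∈ M, χ * ψ ∈ M) {χ : G →* ℂ} (hχM : χ ∈ M) (hχ : χ ≠ 1)
    (hr : 0 < r) (hrk : r < #D) :
    (Fintype.card G : ℝ) = 2 * (#D - r) := by
  obtain ⟨x, hx⟩ := DFunLike.ne_iff.1 hχ
  have hx1 : x ≠ 1 := fun h => hx (by simp [h])
  have hxM : ¬ ∀ ψ ∈ M, ψ x = 1 := fun h => hx (h χ hχM)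
  have h := card_mul_addInvCoeff hM hvals hMmul x
  simp only [hx1, hxM, if_false, mul_zero, zero_add] at h
  exact card_eq_two_mul_sub_of_mul_eq h (addInvCoeff_eq_zero_or_one_or_two D x) hr hrk
    (card_le_univ D)

theorem re_eq_zero_of_not_mem (hM : ∀ χ, χ ∈ M ↔ χ = 1 ∨ ∑ d ∈ D, χ d = r)
    (hvals : ∀ χ : G →* ℂ, χ ≠ 1 →
      ∑ d ∈ D, χ d = r ∨ ∑ d ∈ D, χ d = a ∨ ∑ d ∈ D, χ d = conj a)
    (hMmul : ∀ χ ∈ M, ∀ ψ ∈ M, χ * ψ ∈ M) {ψ : G →* ℂ} (hψ : ψ ∉ M)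
    (hv2 : (Fintype.card G : ℝ) = 2 * (#D - r)) (hv4 : Fintype.card G = 4 * r ^ 2)
    (hre : a.re ^ 2 < r ^ 2) :
    a.re = 0 := by
  have h1M : 1 ∈ M := (hM 1).2 (Or.inl rfl)
  obtain ⟨g, hg1, hg⟩ := exists_ne_one_forall_apply_eq_one hMmul h1M
    (CommGroup.card_monoidHom_complex (G := G) ▸ card_lt_univ_of_notMem hψ)
  have h₁ := card_mul_addInvCoeff hM hvals hMmul g
  have h₂ := card_mul_addInvCoeff hM hvals hMmul 1
  rw [if_neg hg1, if_pos hg, mul_zero, zero_add, ← hv2] at h₁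
  simp only [map_one, implies_true, if_true, ← hv2] at h₂
  exact eq_zero_of_mul_eq_of_sq_lt hre hv4 (card_pos.2 ⟨1, h1M⟩) h₁
    (addInvCoeff_eq_zero_or_one_or_two D g) h₂ (addInvCoeff_one_eq_zero_or_two D)

end Spectrum

theorem M_subgroup_case_general {G : Type*} [CommGroup G] [Fintype G] [DecidableEq G]
    (D : Finset G) (v k lam n : ℕ) (hv : Fintype.card G = v)
    (hk : D.card = k) (hDS : IsDiffSet D lam) (hlam : 0 < lam) (hlk : lam < k)
    (hn : n = k - lam)
    (r : ℕ) (hr : r ^ 2 = n)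
    (a : ℂ) (ha : a * (starRingEnd ℂ) a = (n : ℂ)) (haa : a ≠ (starRingEnd ℂ) a)
    (hvals : {z : ℂ | ∃ χ : G →* ℂ, χ ≠ 1 ∧ ∑ d ∈ D, χ d = z}
      = {(r : ℂ), a, (starRingEnd ℂ) a})
    (M : Set (G →* ℂ))
    (hM : M = {1} ∪ {χ : G →* ℂ | χ ≠ 1 ∧ ∑ d ∈ D, χ d = (r : ℂ)})
    (hMmul : ∀ χ ∈ M, ∀ ψ ∈ M, χ * ψ ∈ M) :
    (v : ℤ) = 2 * ((k : ℤ) - (r : ℤ)) ∧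
      v = 4 * n ∧ k = 2 * n + r ∧ lam = n + r ∧
      a + (starRingEnd ℂ) a = 0 := by
  classical
  have : Fintype (G →* ℂ) := Fintype.ofFinite _
  subst hv hk
  set Mf := M.toFinset
  have hMf (χ : G →* ℂ) : χ ∈ Mf ↔ χ = 1 ∨ ∑ d ∈ D, χ d = r := by
    rw [Set.mem_toFinset, hM]
    by_cases h : χ = 1 <;> simp [h]
  have hspec (χ : G →* ℂ) (hχ : χ ≠ 1) :
      ∑ d ∈ D, χ d = r ∨ ∑ d ∈ D, χ d = a ∨ ∑ d ∈ D, χ d = conj a := by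
    simpa using (hvals.subset ⟨χ, hχ, rfl⟩ : ∑ d ∈ D, χ d ∈ ({(r : ℂ), a, conj a} : Set ℂ))
  have hclosed : ∀ χ ∈ Mf, ∀ ψ ∈ Mf, χ * ψ ∈ Mf := by simpa [Mf] using hMmul
  obtain ⟨χr, hχr1, hχr⟩ : ∃ χ : G →* ℂ, χ ≠ 1 ∧ ∑ d ∈ D, χ d = r := hvals.superset (by simp)
  obtain ⟨χa, hχa1, hχa⟩ : ∃ χ : G →* ℂ, χ ≠ 1 ∧ ∑ d ∈ D, χ d = a := hvals.superset (by simp)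
  have hχaM : χa ∉ Mf := by
    rw [hMf]
    rintro (h | h)
    exacts [hχa1 h, haa (by rw [← hχa, h, Complex.conj_natCast])]
  have hr0 : 0 < r := by rcases Nat.eq_zero_or_pos r with rfl | h <;> omega
  have hrk : r < #D := by have := Nat.le_self_pow two_ne_zero r; omega
  have hv2 := card_eq_two_mul_sub_of_mem hMf hspec hclosed ((hMf χr).2 (Or.inr hχr)) hχr1 hr0 hrk
  obtain ⟨hv4, hk2, hlam2⟩ := params_of_card_eq_two_mul_sub hDS.card_mul_card hn hr hlk hrk
    (by exact_mod_cast hv2)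
  have hre := Complex.re_sq_lt_of_mul_conj_eq (x := n) (by exact_mod_cast ha) haa
  rw [← hr, Nat.cast_pow] at hre
  refine ⟨by exact_mod_cast hv2, hv4, hk2, hlam2, ?_⟩
  rw [Complex.add_conj, re_eq_zero_of_not_mem hMf hspec hclosed hχaM hv2 (by omega) hre]
  simp

/-- Let `D` be a `(v,k,λ)` difference set of order `n = k - λ` with exactly the three
nontrivial character values `√n, a, ā`, and suppose
`M = {χ₀} ∪ {χ : χ(D) = √n}` is a subgroup of the character group `Ĝ` (i.e. closed
under multiplication and inversion). Then `v = 2(k - √n)`, the parameters are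
`(v,k,λ) = (4n, 2n+√n, n+√n)`, and `a + ā = 0`. -/
theorem M_subgroup_case {G : Type*} [CommGroup G] [Fintype G] [DecidableEq G]
    (D : Finset G) (v k lam n : ℕ) (hv : Fintype.card G = v)
    (hk : D.card = k) (hDS : IsDiffSet D lam) (hlam : 0 < lam) (hlk : lam < k)
    (hn : n = k - lam)
    (r : ℕ) (hr : r ^ 2 = n)
    (a : ℂ) (ha : a * (starRingEnd ℂ) a = (n : ℂ)) (haa : a ≠ (starRingEnd ℂ) a)
    (hvals : {z : ℂ | ∃ χ : G →* ℂ, χ ≠ 1 ∧ ∑ d ∈ D, χ d = z}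
      = {(r : ℂ), a, (starRingEnd ℂ) a})
    (h3 : ({(r : ℂ), a, (starRingEnd ℂ) a} : Set ℂ).ncard = 3)
    (M : Set (G →* ℂ))
    (hM : M = {1} ∪ {χ : G →* ℂ | χ ≠ 1 ∧ ∑ d ∈ D, χ d = (r : ℂ)})
    (hMmul : ∀ χ ∈ M, ∀ ψ ∈ M, χ * ψ ∈ M)
    (hMinv : ∀ χ ∈ M, χ.comp (MulEquiv.inv G).toMonoidHom ∈ M) :
    (v : ℤ) = 2 * ((k : ℤ) - (r : ℤ)) ∧
      v = 4 * n ∧ k = 2 * n + r ∧ lam = n + r ∧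
      a + (starRingEnd ℂ) a = 0 :=
  M_subgroup_case_general D v k lam n hv hk hDS hlam hlk hn r hr a ha haa hvals M hM hMmul
end
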